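/- arXiv:1506.02194 — 3 statements merged into one kernel-verified Lean document; each statement's English description precedes it below -/
import Mathlib

section
/- For all real numbers a, b with b ≤ a, one has (1/4)·h(a,b) ≤ (e^a − e^b)/((1+e^a)(1+e^b)) ≤ h(a,b), where h(a,b) := max(min(1,e^a) − min(1,e^b), min(1,e^{−b}) − min(1,e^{−a})). -/
/-!
With `x = exp a`, `y = exp b`, the middle term is `x / (1 + x) - y / (1 + y)` and the
substitution `(x, y) ↦ (y⁻¹, x⁻¹)` fixes it while swapping the two Metropolis gaps
`min 1 x - min 1 y` and `min 1 y⁻¹ - min 1 x⁻¹`. So it suffices to bound the middle term below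
by a quarter of the first gap for all `0 < y ≤ x`, and above by the first gap when `x y ≤ 1`
(the case `1 ≤ x y` being the image of this one under the substitution). Each bound is an
elementary polynomial inequality once the signs of `x - 1` and `y - 1` are fixed.
-/

section

variable {K : Type*} [Field K] [LinearOrder K] [IsStrictOrderedRing K] {x y : K}

theorem inv_sub_inv_div_one_add_inv_mul_one_add_inv (hx : 0 < x) (hy : 0 < y) :
    (y⁻¹ - x⁻¹) / ((1 + y⁻¹) * (1 + x⁻¹)) = (x - y) / ((1 + x) * (1 + y)) := by
  field_simp
  ring

theorem one_div_four_mul_min_one_sub_min_one_le (hy : 0 < y) (hyx : y ≤ x) :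
    1 / 4 * (min 1 x - min 1 y) ≤ (x - y) / ((1 + x) * (1 + y)) := by
  have hD : 0 < (1 + x) * (1 + y) := by nlinarith
  rcases le_total x 1 with hx1 | hx1
  · rw [min_eq_right hx1, min_eq_right (hyx.trans hx1), one_div_mul_eq_div]
    exact div_le_div_of_nonneg_left (by linarith) hD (by nlinarith)
  rcases le_total y 1 with hy1 | hy1
  · rw [min_eq_left hx1, min_eq_right hy1, le_div_iff₀ hD]
    nlinarith [mul_nonneg (sub_nonneg.2 hx1) (sq_nonneg y), sq_nonneg (1 - y)]
  · rw [min_eq_left hx1, min_eq_left hy1, sub_self, mul_zero]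
    exact div_nonneg (sub_nonneg.2 hyx) hD.le

theorem div_one_add_mul_one_add_le_min_one_sub_min_one (hy : 0 < y) (hyx : y ≤ x)
    (hxy : x * y ≤ 1) :
    (x - y) / ((1 + x) * (1 + y)) ≤ min 1 x - min 1 y := by
  have hD : 0 < (1 + x) * (1 + y) := by nlinarith
  rcases le_total x 1 with hx1 | hx1
  · rw [min_eq_right hx1, min_eq_right (hyx.trans hx1)]
    exact div_le_self (sub_nonneg.2 hyx) (by nlinarith)
  · have hy1 : y ≤ 1 := by nlinarith
    rw [min_eq_left hx1, min_eq_right hy1, div_le_iff₀ hD]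
    nlinarith [mul_le_mul_of_nonneg_right hxy hy.le]

end

theorem dobrushin_comparison_ineq (a b : ℝ) (hba : b ≤ a) :
    (1 / 4) * max (min 1 (Real.exp a) - min 1 (Real.exp b))
        (min 1 (Real.exp (-b)) - min 1 (Real.exp (-a)))
      ≤ (Real.exp a - Real.exp b) / ((1 + Real.exp a) * (1 + Real.exp b)) ∧
    (Real.exp a - Real.exp b) / ((1 + Real.exp a) * (1 + Real.exp b))
      ≤ max (min 1 (Real.exp a) - min 1 (Real.exp b))
          (min 1 (Real.exp (-b)) - min 1 (Real.exp (-a))) := by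
  rw [Real.exp_neg, Real.exp_neg]
  set x := Real.exp a
  set y := Real.exp b
  have hx : 0 < x := Real.exp_pos a
  have hy : 0 < y := Real.exp_pos b
  have hyx : y ≤ x := Real.exp_le_exp.2 hba
  have hyx_inv : x⁻¹ ≤ y⁻¹ := inv_anti₀ hy hyx
  have hsymm := inv_sub_inv_div_one_add_inv_mul_one_add_inv hx hy
  constructor
  · rw [mul_max_of_nonneg _ _ (by norm_num)]
    refine max_le (one_div_four_mul_min_one_sub_min_one_le hy hyx) ?_
    rw [← hsymm]
    exact one_div_four_mul_min_one_sub_min_one_le (inv_pos.2 hx) hyx_inv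
  · rcases le_total (x * y) 1 with hxy | hxy
    · exact le_max_of_le_left (div_one_add_mul_one_add_le_min_one_sub_min_one hy hyx hxy)
    · rw [← hsymm]
      refine le_max_of_le_right
        (div_one_add_mul_one_add_le_min_one_sub_min_one (inv_pos.2 hx) hyx_inv ?_)
      rw [← mul_inv_rev]
      exact inv_le_one_of_one_le₀ hxy
end

section
/- Second derivative of log-determinant: with L positive definite and f(S) := log det(L_S) as above, for distinct i, j ∉ S, Δ_jΔ_i f(S) = log(1 − ρ(i,j|S)²), where ρ(i,j|S) := (L_{ij} − L_{i,S}L_S^{−1}L_{S,j}) / √((L_{ii} − L_{i,S}L_S^{−1}L_{S,i})·(L_{jj} − L_{j,S}L_S^{−1}L_{S,j})). In particular Δ_jΔ_i f(S) ≤ 0, so f is submodular. -/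
open Matrix

/-- Schur complement `L_{ii} - L_{i,S} L_S⁻¹ L_{S,i}` (conditional variance). -/
noncomputable def schurCompl (n : ℕ) (L : Matrix (Fin n) (Fin n) ℝ)
    (i : Fin n) (S : Finset (Fin n)) : ℝ :=
  L i i - (fun j : S => L i (j : Fin n)) ⬝ᵥ
    ((L.submatrix (fun x : S => (x : Fin n)) (fun x : S => (x : Fin n)))⁻¹ *ᵥ
      fun j : S => L (j : Fin n) i)

/-- Conditional covariance `L_{ij} - L_{i,S} L_S⁻¹ L_{S,j}`. -/
noncomputable def condCov (n : ℕ) (L : Matrix (Fin n) (Fin n) ℝ)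
    (i j : Fin n) (S : Finset (Fin n)) : ℝ :=
  L i j - (fun k : S => L i (k : Fin n)) ⬝ᵥ
    ((L.submatrix (fun x : S => (x : Fin n)) (fun x : S => (x : Fin n)))⁻¹ *ᵥ
      fun k : S => L (k : Fin n) j)

/-- Conditional correlation coefficient `ρ(i,j|S)`. -/
noncomputable def condCorr (n : ℕ) (L : Matrix (Fin n) (Fin n) ℝ)
    (i j : Fin n) (S : Finset (Fin n)) : ℝ :=
  condCov n L i j S / Real.sqrt (schurCompl n L i S * schurCompl n L j S)

/-!
By the Schur complement formula, adjoining a block `g` of indices to `S` multiplies `det L_S` by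
the determinant of the conditional covariance matrix `(condCov (g a) (g b) S)`. Hence, with
`p = σ²(i|S)`, `q = σ²(j|S)`, `c = cov(i,j|S)`, the four determinants in the second difference are
`det L_S` times `1`, `p`, `q` and `pq - c²`, so the second difference is
`log ((pq - c²) / pq) = log (1 - ρ²)`. Positive definiteness makes all of these positive, and
`pq - c² ≤ pq` gives the sign.
-/

section

variable {n : ℕ}

theorem det_submatrix_eq_of_range_eq {α : Type*} [Fintype α] [DecidableEq α]
    (L : Matrix (Fin n) (Fin n) ℝ) {T : Finset (Fin n)} {f : α → Fin n}
    (hf : Function.Injective f) (hT : Set.range f = T) :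
    (L.submatrix (fun x : T => (x : Fin n)) (fun x : T => (x : Fin n))).det =
      (L.submatrix f f).det :=
  (det_submatrix_equiv_self ((Equiv.ofInjective f hf).trans (Equiv.setCongr hT)) _).symm

theorem condCov_comm {L : Matrix (Fin n) (Fin n) ℝ} (hL : L.IsSymm) (i j : Fin n)
    (S : Finset (Fin n)) : condCov n L i j S = condCov n L j i S := by
  set A := L.submatrix (fun x : S => (x : Fin n)) (fun x : S => (x : Fin n))
  have hA : Aᵀ = A := by rw [transpose_submatrix, hL]
  have hrow : ∀ a, (fun k : S => L a k) = fun k : S => L k a :=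
    fun a => funext fun k => hL.apply k a
  unfold condCov
  rw [hrow i, hrow j, hL.apply i j, dotProduct_comm, dotProduct_mulVec, ← mulVec_transpose,
    transpose_nonsing_inv, hA]

theorem schurCompl_eq_condCov (L : Matrix (Fin n) (Fin n) ℝ) (i : Fin n) (S : Finset (Fin n)) :
    schurCompl n L i S = condCov n L i i S :=
  rfl

theorem submatrix_sumElim {ι α β R : Type*} (L : Matrix ι ι R) (f : α → ι) (g : β → ι) :
    L.submatrix (Sum.elim f g) (Sum.elim f g) =
      fromBlocks (L.submatrix f f) (L.submatrix f g) (L.submatrix g f) (L.submatrix g g) := by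
  ext (a | a) (b | b) <;> rfl

theorem submatrix_schur_apply {γ : Type*} (L : Matrix (Fin n) (Fin n) ℝ) (S : Finset (Fin n))
    (g : γ → Fin n) (a b : γ) :
    (L.submatrix g g - L.submatrix g (fun x : S => (x : Fin n)) *
      (L.submatrix (fun x : S => (x : Fin n)) (fun x : S => (x : Fin n)))⁻¹ *
      L.submatrix (fun x : S => (x : Fin n)) g) a b = condCov n L (g a) (g b) S := by
  simp only [condCov, Matrix.sub_apply, submatrix_apply, Matrix.mul_assoc, mul_apply, dotProduct,
    mulVec]

theorem det_submatrix_sumElim {γ : Type*} [Fintype γ] [DecidableEq γ]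
    {L : Matrix (Fin n) (Fin n) ℝ} (hL : L.PosDef) (S : Finset (Fin n)) (g : γ → Fin n) :
    (L.submatrix (Sum.elim (fun x : S => (x : Fin n)) g)
        (Sum.elim (fun x : S => (x : Fin n)) g)).det =
      (L.submatrix (fun x : S => (x : Fin n)) (fun x : S => (x : Fin n))).det *
        (of fun a b => condCov n L (g a) (g b) S).det := by
  have := (hL.submatrix (Subtype.coe_injective (p := (· ∈ S)))).isUnit.invertible
  rw [submatrix_sumElim, det_fromBlocks₁₁, invOf_eq_nonsing_inv]
  congr 2
  ext a b
  exact submatrix_schur_apply L S g a b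

theorem det_submatrix_of_union_eq {γ : Type*} [Fintype γ] [DecidableEq γ]
    {L : Matrix (Fin n) (Fin n) ℝ} (hL : L.PosDef) {S T : Finset (Fin n)} {g : γ → Fin n}
    (hg : Function.Injective g) (hgS : ∀ a, g a ∉ S)
    (hT : ↑S ∪ Set.range g = (T : Set (Fin n))) :
    (L.submatrix (fun x : T => (x : Fin n)) (fun x : T => (x : Fin n))).det =
      (L.submatrix (fun x : S => (x : Fin n)) (fun x : S => (x : Fin n))).det *
        (of fun a b => condCov n L (g a) (g b) S).det := by
  have hinj : Function.Injective (Sum.elim (fun x : S => (x : Fin n)) g) :=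
    Subtype.coe_injective.sumElim hg fun x a h => hgS a (h ▸ x.2)
  have hrange : Set.range (Sum.elim (fun x : S => (x : Fin n)) g) = T := by
    simpa [Set.Sum.elim_range] using hT
  rw [det_submatrix_eq_of_range_eq L hinj hrange, det_submatrix_sumElim hL]

theorem det_submatrix_insert {L : Matrix (Fin n) (Fin n) ℝ} (hL : L.PosDef)
    {S : Finset (Fin n)} {i : Fin n} (hi : i ∉ S) :
    (L.submatrix (fun x : (insert i S : Finset (Fin n)) => (x : Fin n))
        (fun x : (insert i S : Finset (Fin n)) => (x : Fin n))).det =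
      (L.submatrix (fun x : S => (x : Fin n)) (fun x : S => (x : Fin n))).det *
        condCov n L i i S := by
  rw [det_submatrix_of_union_eq hL (g := fun _ : Unit => i) (Function.injective_of_subsingleton _)
    (fun _ => hi) (by ext; simp), det_unique (of fun _ _ : Unit => _)]
  rfl

theorem det_submatrix_insert_insert {L : Matrix (Fin n) (Fin n) ℝ} (hL : L.PosDef)
    {S : Finset (Fin n)} {i j : Fin n} (hij : i ≠ j) (hi : i ∉ S) (hj : j ∉ S) :
    (L.submatrix (fun x : (insert i (insert j S) : Finset (Fin n)) => (x : Fin n))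
        (fun x : (insert i (insert j S) : Finset (Fin n)) => (x : Fin n))).det =
      (L.submatrix (fun x : S => (x : Fin n)) (fun x : S => (x : Fin n))).det *
        (condCov n L i i S * condCov n L j j S - condCov n L i j S ^ 2) := by
  rw [det_submatrix_of_union_eq hL (injective_pair_iff_ne.mpr hij)
    (fun a => by fin_cases a <;> assumption) (by ext; simp [or_left_comm])]
  simp [det_fin_two, sq, condCov_comm (isHermitian_iff_isSymm.mp hL.1) j i]

theorem det_submatrix_pos {L : Matrix (Fin n) (Fin n) ℝ} (hL : L.PosDef) (T : Finset (Fin n)) :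
    0 < (L.submatrix (fun x : T => (x : Fin n)) (fun x : T => (x : Fin n))).det :=
  (hL.submatrix Subtype.coe_injective).det_pos

theorem condCov_self_pos {L : Matrix (Fin n) (Fin n) ℝ} (hL : L.PosDef) {S : Finset (Fin n)}
    {i : Fin n} (hi : i ∉ S) : 0 < condCov n L i i S := by
  have h := det_submatrix_pos hL (insert i S)
  rw [det_submatrix_insert hL hi] at h
  exact pos_of_mul_pos_right h (det_submatrix_pos hL S).le

theorem condCov_det_pos {L : Matrix (Fin n) (Fin n) ℝ} (hL : L.PosDef) {S : Finset (Fin n)}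
    {i j : Fin n} (hij : i ≠ j) (hi : i ∉ S) (hj : j ∉ S) :
    0 < condCov n L i i S * condCov n L j j S - condCov n L i j S ^ 2 := by
  have h := det_submatrix_pos hL (insert i (insert j S))
  rw [det_submatrix_insert_insert hL hij hi hj] at h
  exact pos_of_mul_pos_right h (det_submatrix_pos hL S).le

theorem one_sub_condCorr_sq {L : Matrix (Fin n) (Fin n) ℝ} {S : Finset (Fin n)} {i j : Fin n}
    (hi : 0 < condCov n L i i S) (hj : 0 < condCov n L j j S) :
    1 - condCorr n L i j S ^ 2 =
      (condCov n L i i S * condCov n L j j S - condCov n L i j S ^ 2) /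
        (condCov n L i i S * condCov n L j j S) := by
  rw [condCorr, schurCompl_eq_condCov, schurCompl_eq_condCov, div_pow,
    Real.sq_sqrt (mul_pos hi hj).le]
  field_simp

end

theorem logdet_second_derivative_general (n : ℕ) (L : Matrix (Fin n) (Fin n) ℝ)
    (hL : L.PosDef)
    (f : Finset (Fin n) → ℝ)
    (hf : ∀ S : Finset (Fin n),
      f S = Real.log ((L.submatrix (fun x : S => (x : Fin n)) (fun x : S => (x : Fin n))).det))
    (i j : Fin n) (hij : i ≠ j) (S : Finset (Fin n)) (hi : i ∉ S) (hj : j ∉ S) :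
    (f (insert i (insert j S)) - f (insert j S)) - (f (insert i S) - f S) =
      Real.log (1 - (condCorr n L i j S) ^ 2) ∧
    (f (insert i (insert j S)) - f (insert j S)) - (f (insert i S) - f S) ≤ 0 := by
  have hS := det_submatrix_pos hL S
  have hp := condCov_self_pos hL hi
  have hq := condCov_self_pos hL hj
  have hpq := mul_pos hp hq
  have hpqc := condCov_det_pos hL hij hi hj
  have hsecond : (f (insert i (insert j S)) - f (insert j S)) - (f (insert i S) - f S) =
      Real.log (1 - condCorr n L i j S ^ 2) := by
    rw [hf, hf, hf, hf, det_submatrix_insert_insert hL hij hi hj, det_submatrix_insert hL hi,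
      det_submatrix_insert hL hj, one_sub_condCorr_sq hp hq,
      Real.log_mul hS.ne' hpqc.ne', Real.log_mul hS.ne' hp.ne', Real.log_mul hS.ne' hq.ne',
      Real.log_div hpqc.ne' hpq.ne', Real.log_mul hp.ne' hq.ne']
    ring
  refine ⟨hsecond, hsecond ▸ Real.log_nonpos ?_ ?_⟩ <;> rw [one_sub_condCorr_sq hp hq]
  · exact (div_pos hpqc hpq).le
  · exact div_le_one_of_le₀ (by linarith [sq_nonneg (condCov n L i j S)]) hpq.le

theorem logdet_second_derivative (n : ℕ) (L : Matrix (Fin n) (Fin n) ℝ)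
    (hL : L.PosDef) (hLsym : L.IsSymm)
    (f : Finset (Fin n) → ℝ)
    (hf : ∀ S : Finset (Fin n),
      f S = Real.log ((L.submatrix (fun x : S => (x : Fin n)) (fun x : S => (x : Fin n))).det))
    (i j : Fin n) (hij : i ≠ j) (S : Finset (Fin n)) (hi : i ∉ S) (hj : j ∉ S) :
    (f (insert i (insert j S)) - f (insert j S)) - (f (insert i S) - f S) =
      Real.log (1 - (condCorr n L i j S) ^ 2) ∧
    (f (insert i (insert j S)) - f (insert j S)) - (f (insert i S) - f S) ≤ 0 :=
  logdet_second_derivative_general n L hL f hf i j hij S hi hj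
end

section
/- One-step contraction via Wasserstein matrix: let 𝕊 = {0,1}^V with V finite, T^{[i]}(x,z) := K^{[i]}(x,z^i)·[z^{V∖{i}} = x^{V∖{i}}], and define oscillations δ_j(h) := max_x |h(x^{V∖{j}}0^j) − h(x^{V∖{j}}1^j)| and Dobrushin coefficients C_{ij} := max_x |K^{[i]}_{x^{V∖{j}}0^j}({0}) − K^{[i]}_{x^{V∖{j}}1^j}({0})|. Then for every function h : 𝕊 → ℝ and every j ∈ V: δ_j(T^{[i]} h) ≤ δ_i(h)·C_{ij} + δ_j(h)·[i ≠ j]. -/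
/-!
Fix `x` and let `y₀, y₁` be `x` with site `j` set to `0, 1`. Then `T^{[i]} h (y₀) - T^{[i]} h (y₁)`
splits into the average, under `K^{[i]}_{y₀}`, of `h(y₀^{V∖{i}} b^i) - h(y₁^{V∖{i}} b^i)` (at most
`δ_j(h)` for `i ≠ j`, zero for `i = j`), plus the difference of the two Bernoulli laws
`K^{[i]}_{y₀}, K^{[i]}_{y₁}` integrated against `b ↦ h(y₁^{V∖{i}} b^i)`, which equals
`(K^{[i]}_{y₀}({0}) - K^{[i]}_{y₁}({0})) (h(y₁^{V∖{i}} 0^i) - h(y₁^{V∖{i}} 1^i))` and so is at most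
`C_{ij} δ_i(h)`.
-/

open Finset

open Function

section WeightedAverages

theorem abs_sum_mul_le_of_abs_le {ι : Type*} [Fintype ι] {p d : ι → ℝ} {D : ℝ}
    (hp : ∀ b, 0 ≤ p b) (hp1 : ∑ b, p b = 1) (hd : ∀ b, |d b| ≤ D) :
    |∑ b, p b * d b| ≤ D :=
  calc |∑ b, p b * d b| ≤ ∑ b, |p b * d b| := abs_sum_le_sum_abs _ _
    _ ≤ ∑ b, p b * D := sum_le_sum fun b _ => by
        rw [abs_mul, abs_of_nonneg (hp b)]
        exact mul_le_mul_of_nonneg_left (hd b) (hp b)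
    _ = D := by rw [← sum_mul, hp1, one_mul]

theorem sum_bool_mul_sub_sum_bool_mul {p q g : Bool → ℝ}
    (hp : ∑ b, p b = 1) (hq : ∑ b, q b = 1) :
    ∑ b, p b * g b - ∑ b, q b * g b = (p false - q false) * (g false - g true) := by
  rw [Fintype.sum_bool] at hp hq ⊢
  rw [Fintype.sum_bool]
  linear_combination g true * hp - g true * hq

theorem abs_sum_bool_mul_sub_sum_bool_mul_le {p q f g : Bool → ℝ} {D : ℝ}
    (hp0 : ∀ b, 0 ≤ p b) (hp : ∑ b, p b = 1) (hq : ∑ b, q b = 1)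
    (hfg : ∀ b, |f b - g b| ≤ D) :
    |∑ b, p b * f b - ∑ b, q b * g b| ≤ D + |p false - q false| * |g false - g true| := by
  have hsplit : ∑ b, p b * f b - ∑ b, q b * g b =
      ∑ b, p b * (f b - g b) + (p false - q false) * (g false - g true) := by
    rw [← sum_bool_mul_sub_sum_bool_mul hp hq, ← sum_sub_distrib]
    simp only [mul_sub, sum_sub_distrib]
    ring
  rw [hsplit, ← abs_mul]
  exact (abs_add_le _ _).trans (add_le_add_left (abs_sum_mul_le_of_abs_le hp0 hp hfg) _)

end WeightedAverages

namespace SpinSystem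

variable {V : Type*} [Fintype V] [DecidableEq V]

noncomputable def osc (j : V) (h : (V → Bool) → ℝ) : ℝ :=
  univ.sup' univ_nonempty fun x => |h (update x j false) - h (update x j true)|

noncomputable def dobrushinCoeff (K : V → (V → Bool) → Bool → ℝ) (i j : V) : ℝ :=
  univ.sup' univ_nonempty fun x =>
    |K i (update x j false) false - K i (update x j true) false|

def resample (K : V → (V → Bool) → Bool → ℝ) (i : V) (h : (V → Bool) → ℝ) (x : V → Bool) : ℝ :=
  ∑ b, K i x b * h (update x i b)

theorem abs_sub_le_osc (j : V) (h : (V → Bool) → ℝ) (x : V → Bool) :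
    |h (update x j false) - h (update x j true)| ≤ osc j h :=
  le_sup' (fun x => |h (update x j false) - h (update x j true)|) (mem_univ x)

theorem abs_sub_le_dobrushinCoeff (K : V → (V → Bool) → Bool → ℝ) (i j : V) (x : V → Bool) :
    |K i (update x j false) false - K i (update x j true) false| ≤ dobrushinCoeff K i j :=
  le_sup' (fun x => |K i (update x j false) false - K i (update x j true) false|) (mem_univ x)

theorem abs_update_update_sub_le (h : (V → Bool) → ℝ) (i j : V) (x : V → Bool) (b : Bool) :
    |h (update (update x j false) i b) - h (update (update x j true) i b)| ≤
      osc j h * if i = j then 0 else 1 := by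
  by_cases hij : i = j
  · subst hij
    simp
  · rw [if_neg hij, mul_one, update_comm (Ne.symm hij), update_comm (Ne.symm hij)]
    exact abs_sub_le_osc j h _

theorem osc_resample_le (K : V → (V → Bool) → Bool → ℝ) (hKnonneg : ∀ i x b, 0 ≤ K i x b)
    (hKprob : ∀ i x, ∑ b, K i x b = 1) (i j : V) (h : (V → Bool) → ℝ) :
    osc j (resample K i h) ≤
      osc i h * dobrushinCoeff K i j + osc j h * if i = j then 0 else 1 := by
  refine sup'_le _ _ fun x _ => ?_
  set y₀ := update x j false
  set y₁ := update x j true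
  calc |resample K i h y₀ - resample K i h y₁|
      ≤ (osc j h * if i = j then 0 else 1) +
          |K i y₀ false - K i y₁ false| * |h (update y₁ i false) - h (update y₁ i true)| :=
        abs_sum_bool_mul_sub_sum_bool_mul_le (hKnonneg i y₀) (hKprob i y₀) (hKprob i y₁)
          (abs_update_update_sub_le h i j x)
    _ ≤ (osc j h * if i = j then 0 else 1) + dobrushinCoeff K i j * osc i h := by
        gcongr _ + ?_
        exact mul_le_mul (abs_sub_le_dobrushinCoeff K i j x) (abs_sub_le_osc i h y₁)
          (abs_nonneg _) ((abs_nonneg _).trans (abs_sub_le_dobrushinCoeff K i j x))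
    _ = osc i h * dobrushinCoeff K i j + osc j h * if i = j then 0 else 1 := by ring

end SpinSystem

open SpinSystem in
theorem wasserstein_one_step_contraction {V : Type*} [Fintype V] [DecidableEq V]
    (K : V → (V → Bool) → Bool → ℝ)
    (hKnonneg : ∀ i x b, 0 ≤ K i x b)
    (hKprob : ∀ i x, ∑ b : Bool, K i x b = 1)
    (T : V → ((V → Bool) → ℝ) → ((V → Bool) → ℝ))
    (hT : ∀ i h x, T i h x = ∑ b : Bool, K i x b * h (Function.update x i b))
    (δ : V → ((V → Bool) → ℝ) → ℝ)
    (hδ : ∀ j h, δ j h = Finset.univ.sup' Finset.univ_nonempty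
      (fun x : V → Bool =>
        |h (Function.update x j false) - h (Function.update x j true)|))
    (C : V → V → ℝ)
    (hC : ∀ i j, C i j = Finset.univ.sup' Finset.univ_nonempty
      (fun x : V → Bool =>
        |K i (Function.update x j false) false - K i (Function.update x j true) false|))
    (i j : V) (h : (V → Bool) → ℝ) :
    δ j (T i h) ≤ δ i h * C i j + δ j h * (if i = j then 0 else 1) := by
  obtain rfl : T = resample K := funext₃ hT
  obtain rfl : δ = osc := funext₂ hδ
  obtain rfl : C = dobrushinCoeff K := funext₂ hC
  exact osc_resample_le K hKnonneg hKprob i j h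
end
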